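/- Let G be an arbitrary simple complex algebraic group (not necessarily simply-connected). Every dominant integral weight λ with V(λ) ⊂ H•(G/B, ∧•𝒯_{G/B}) satisfies λ ≤ 2ρ and hence lies in the root lattice Q, so V(λ) is a representation of G; consequently, if Kostant's conjecture holds for the simply-connected cover, then for λ ∈ P⁺ one has V(λ) ⊂ H•(G/B, ∧•𝒯_{G/B}) if and only if λ ≤ 2ρ, with multiplicity at least m_λ. -/

import Mathlib

open scoped BigOperators

namespace KostantHH

/-- The integral weight lattice of a rank-`ℓ` simple, simply-connected group /
simple Lie algebra, written in fundamental-weight coordinates (so the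
fundamental weights `ϖᵢ` are the standard basis vectors, and pairing a weight
with the `i`-th simple coroot is taking its `i`-th coordinate). -/
abbrev P (ℓ : ℕ) := Fin ℓ → ℤ

/-- The group algebra `ℤ[P]` of the weight lattice. -/
abbrev R (ℓ : ℕ) := AddMonoidAlgebra ℤ (P ℓ)

/-- `e μ` is the basis element `e^μ` of `ℤ[P]`. -/
noncomputable def e {ℓ : ℕ} (μ : P ℓ) : R ℓ := AddMonoidAlgebra.single μ 1

/-- The Weyl vector `ρ = ϖ₁ + ⋯ + ϖ_ℓ`, i.e. `(1,…,1)` in fundamental-weight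
coordinates. -/
def ρ {ℓ : ℕ} : P ℓ := fun _ => 1

/-- A weight is dominant iff all its fundamental-weight coordinates (= pairings
with the simple coroots) are nonnegative. -/
def dominant {ℓ : ℕ} (lam : P ℓ) : Prop := ∀ i, 0 ≤ lam i

/-- The combinatorial root datum of a finite-dimensional simple complex Lie
algebra `𝔤` of rank `ℓ`: the simple roots `α i` (written in fundamental-weight
coordinates, so that `α i j = ⟨α i, αⱼ^∨⟩` is the Cartan matrix) and the set
`Φpos` of positive roots, whose sum is `2ρ`. -/
structure RootDatum (ℓ : ℕ) where
  α : Fin ℓ → P ℓ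
  cartan_diag : ∀ i, α i i = 2
  cartan_offdiag : ∀ i j, i ≠ j → α i j ≤ 0
  Φpos : Finset (P ℓ)
  simple_mem : ∀ i, α i ∈ Φpos
  pos_in_cone : ∀ β ∈ Φpos, ∃ c : Fin ℓ → ℕ, β = ∑ i, (c i : ℤ) • α i
  sum_pos_roots : ∑ β ∈ Φpos, β = (2 : ℤ) • ρ

/-- The dominance (Bruhat–Chevalley) order on weights: `λ ≤ μ` iff `μ - λ` is a
nonnegative integral combination of the simple roots (i.e. lies in `Q⁺`). -/
def domle {ℓ : ℕ} (S : RootDatum ℓ) (lam mu : P ℓ) : Prop :=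
  ∃ c : Fin ℓ → ℕ, mu - lam = ∑ i, (c i : ℤ) • S.α i

/-- The simple reflection `sᵢ(μ) = μ - ⟨μ, αᵢ^∨⟩ αᵢ`, as an automorphism of the
weight lattice. -/
def sRefl {ℓ : ℕ} (S : RootDatum ℓ) (i : Fin ℓ) : AddAut (P ℓ) where
  toFun μ := μ - μ i • S.α i
  invFun μ := μ - μ i • S.α i
  left_inv := by
    intro μ
    funext j
    simp only [Pi.sub_apply, Pi.smul_apply, smul_eq_mul]
    rw [S.cartan_diag i]
    ring
  right_inv := by
    intro μ
    funext j
    simp only [Pi.sub_apply, Pi.smul_apply, smul_eq_mul]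
    rw [S.cartan_diag i]
    ring
  map_add' := by
    intro μ ν
    funext j
    simp only [Pi.add_apply, Pi.sub_apply, Pi.smul_apply, smul_eq_mul]
    ring

/-- The Weyl group `W`, realized as the subgroup of automorphisms of the weight
lattice generated by the simple reflections. -/
def Wgrp {ℓ : ℕ} (S : RootDatum ℓ) : AddSubgroup (AddAut (P ℓ)) :=
  AddSubgroup.closure (Set.range (sRefl S))

/-- `w₀` is the longest element of the Weyl group: the (unique) element sending
all positive roots to negative roots. -/
def IsLongest {ℓ : ℕ} (S : RootDatum ℓ) (w₀ : AddAut (P ℓ)) : Prop :=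
  w₀ ∈ Wgrp S ∧ ∀ β ∈ S.Φpos, -(w₀ β) ∈ S.Φpos

/-- The action of a Weyl group element on the group algebra `ℤ[P]`,
`w(e^μ) := e^{w μ}`. -/
noncomputable def wact {ℓ : ℕ} (w : AddAut (P ℓ)) (f : R ℓ) : R ℓ :=
  AddMonoidAlgebra.mapDomain (⇑w) f

/-- The involution `◇` of `ℤ[P]`, determined by `◇(e^μ) = e^{-μ}`. -/
noncomputable def dia {ℓ : ℕ} (f : R ℓ) : R ℓ :=
  AddMonoidAlgebra.mapDomain (fun μ : P ℓ => -μ) f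

/-- The shifted (dot) action of the Weyl group on weights:
`w · λ = w(λ + ρ) - ρ`. -/
def dot {ℓ : ℕ} (w : AddAut (P ℓ)) (lam : P ℓ) : P ℓ := w (lam + ρ) - ρ

/-- `D` is the `i`-th Demazure operator `Dᵢ(f) = (f - e^{-αᵢ}·sᵢ(f))/(1 - e^{-αᵢ})`,
characterized by the equation `Dᵢ(f)·(1 - e^{-αᵢ}) = f - e^{-αᵢ}·sᵢ(f)`. -/
def IsDemazure {ℓ : ℕ} (S : RootDatum ℓ) (i : Fin ℓ) (D : Module.End ℤ (R ℓ)) : Prop :=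
  ∀ f : R ℓ, D f * (1 - e (-(S.α i))) = f - e (-(S.α i)) * wact (sRefl S i) f

/-- `Dw0` is the Demazure operator `D_{w₀} = D_{i₁} ∘ ⋯ ∘ D_{i_k}` attached to a
reduced word `w₀ = s_{i₁} ⋯ s_{i_k}` for the longest element `w₀` (a word for
`w₀` is reduced iff its length is `#Φ⁺ = ℓ(w₀)`). -/
def IsDw0 {ℓ : ℕ} (S : RootDatum ℓ) (w₀ : AddAut (P ℓ))
    (Dw0 : Module.End ℤ (R ℓ)) : Prop :=
  ∃ (word : List (Fin ℓ)) (D : Fin ℓ → Module.End ℤ (R ℓ)),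
    (∀ i, IsDemazure S i (D i)) ∧
    (word.map (sRefl S)).sum = w₀ ∧
    word.length = S.Φpos.card ∧
    Dw0 = (word.map D).prod

/-- The characters of the finite-dimensional irreducible highest weight
`𝔤`-modules `V(λ)`: `chV λ = ch V(λ) = ∑_μ (dim V(λ)_μ) e^μ ∈ ℤ[P]` for
dominant `λ`.  The recorded axioms express that `V(λ)` is a `𝔤`-module with
highest weight `λ` occurring with multiplicity one: weight multiplicities are
nonnegative, the coefficient of `e^λ` is `1`, all weights are `≤ λ` in
dominance order, and the character is Weyl-group invariant. -/
structure CharTheory {ℓ : ℕ} (S : RootDatum ℓ) where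
  chV : P ℓ → R ℓ
  chV_coeff_nonneg : ∀ lam μ, 0 ≤ (chV lam).coeff μ
  chV_self : ∀ lam, dominant lam → (chV lam).coeff lam = 1
  chV_support_le : ∀ lam, dominant lam → ∀ μ ∈ (chV lam).coeff.support, domle S μ lam
  chV_invariant : ∀ lam, dominant lam → ∀ i, wact (sRefl S i) (chV lam) = chV lam

/-- `g ∈ ℤ[P]` is the character of a finite-dimensional `𝔤`-module, i.e. a sum
of characters of irreducibles `V(μ)` with `μ` dominant. -/
def IsChar {ℓ : ℕ} {S : RootDatum ℓ} (T : CharTheory S) (g : R ℓ) : Prop :=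
  ∃ l : List (P ℓ), (∀ μ ∈ l, dominant μ) ∧ g = (l.map T.chV).sum

/-- The irreducible `V(λ)` occurs with multiplicity at least `m` in the
(semisimple, finite-dimensional) `𝔤`-module with character `g`. -/
def OccursWithMult {ℓ : ℕ} {S : RootDatum ℓ} (T : CharTheory S) (m : ℕ)
    (lam : P ℓ) (g : R ℓ) : Prop :=
  ∃ h : R ℓ, IsChar T h ∧ g = (m : ℤ) • T.chV lam + h

/-- The irreducible `V(λ)` occurs as a subrepresentation of the (semisimple,
finite-dimensional) `𝔤`-module with character `g`. -/
def Occurs {ℓ : ℕ} {S : RootDatum ℓ} (T : CharTheory S) (lam : P ℓ) (g : R ℓ) : Prop :=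
  OccursWithMult T 1 lam g


/-!
By Borel–Weil–Bott, an irreducible constituent of `H•(G/B, ∧•𝒯_{G/B})` occurs in some
`V(-w₀(w · ∑_{β ∈ A} β))` with `A ⊆ Φ⁺`. Since `∑_A β - ρ` is a weight of `V(ρ)`, the weight
`w(∑_A β + ρ)` of the `W`-invariant character `ch V(ρ)³` is at most `3ρ`, i.e. `w · ∑_A β ≤ 2ρ`.
The map `-w₀` preserves dominant weights, the dominance order and `2ρ`, so every weight of that
constituent is `≤ 2ρ`. The converse and the multiplicity bound come from
`V(ρ) ⊗ V(ρ) ⊂ H•(G/B, ∧•𝒯_{G/B})` and Kostant's conjecture.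

That `-w₀` preserves dominant weights rests on the linear independence of the simple roots,
proved by averaging the dot product over the finite group `W`.
-/


section GroupAlgebra

variable {ℓ : ℕ}

lemma coeff_e (μ ν : P ℓ) : (e μ).coeff ν = if μ = ν then 1 else 0 := by
  rw [e, AddMonoidAlgebra.coeff_single, Finsupp.single_apply]

lemma coeff_e_nonneg (μ ν : P ℓ) : 0 ≤ (e μ).coeff ν := by
  rw [coeff_e]
  split_ifs <;> norm_num

lemma e_mul_e (μ ν : P ℓ) : e μ * e ν = e (μ + ν) := by
  rw [e, e, e, AddMonoidAlgebra.single_mul_single, mul_one]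

lemma prod_e {ι : Type*} (s : Finset ι) (f : ι → P ℓ) : ∏ i ∈ s, e (f i) = e (∑ i ∈ s, f i) := by
  simp only [e, AddMonoidAlgebra.prod_single, Finset.prod_const_one]

lemma coeff_mul_nonneg {f g : R ℓ} (hf : ∀ x, 0 ≤ f.coeff x) (hg : ∀ x, 0 ≤ g.coeff x)
    (x : P ℓ) : 0 ≤ (f * g).coeff x := by
  rw [AddMonoidAlgebra.coeff_mul]
  refine Finsupp.sum_nonneg fun a _ => Finsupp.sum_nonneg fun b _ => ?_
  split_ifs
  exacts [mul_nonneg (hf a) (hg b), le_rfl]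

lemma add_mem_support_coeff_mul {f g : R ℓ} (hf : ∀ x, 0 ≤ f.coeff x)
    (hg : ∀ x, 0 ≤ g.coeff x) {a b : P ℓ} (ha : a ∈ f.coeff.support)
    (hb : b ∈ g.coeff.support) : a + b ∈ (f * g).coeff.support := by
  rw [Finsupp.mem_support_iff] at ha hb ⊢
  have term_nonneg : ∀ a' b', 0 ≤ if a' + b' = a + b then f.coeff a' * g.coeff b' else 0 := by
    intro a' b'
    split_ifs
    exacts [mul_nonneg (hf a') (hg b'), le_rfl]
  have hpos : 0 < f.coeff a * g.coeff b :=
    mul_pos ((hf a).lt_of_ne' ha) ((hg b).lt_of_ne' hb)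
  rw [AddMonoidAlgebra.coeff_mul]
  refine (hpos.trans_le ?_).ne'
  calc f.coeff a * g.coeff b
      = if a + b = a + b then f.coeff a * g.coeff b else 0 := (if_pos rfl).symm
    _ ≤ ∑ b' ∈ g.coeff.support, if a + b' = a + b then f.coeff a * g.coeff b' else 0 :=
        Finset.single_le_sum (fun b' _ => term_nonneg a b') (Finsupp.mem_support_iff.2 hb)
    _ ≤ ∑ a' ∈ f.coeff.support, ∑ b' ∈ g.coeff.support,
          if a' + b' = a + b then f.coeff a' * g.coeff b' else 0 :=
        Finset.single_le_sum (f := fun a' => ∑ b' ∈ g.coeff.support,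
            if a' + b' = a + b then f.coeff a' * g.coeff b' else 0)
          (fun a' _ => Finset.sum_nonneg fun b' _ => term_nonneg a' b')
          (Finsupp.mem_support_iff.2 ha)

end GroupAlgebra

section WeylGroup

variable {ℓ : ℕ} {S : RootDatum ℓ}

lemma coeff_wact_apply (w : AddAut (P ℓ)) (f : R ℓ) (μ : P ℓ) :
    (wact w f).coeff (w μ) = f.coeff μ := by
  rw [wact, AddMonoidAlgebra.coeff_mapDomain]
  exact Finsupp.mapDomain_apply w.injective _ μ

lemma wact_mul (w : AddAut (P ℓ)) (f g : R ℓ) : wact w (f * g) = wact w f * wact w g :=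
  AddMonoidAlgebra.mapDomain_mul w f g

lemma sRefl_apply (i : Fin ℓ) (μ : P ℓ) : sRefl S i μ = μ - μ i • S.α i := rfl

lemma sRefl_mem_Wgrp (i : Fin ℓ) : sRefl S i ∈ Wgrp S :=
  AddSubgroup.subset_closure ⟨i, rfl⟩

lemma coeff_apply_of_mem_Wgrp {f : R ℓ} (hf : ∀ i, wact (sRefl S i) f = f)
    {w : AddAut (P ℓ)} (hw : w ∈ Wgrp S) (x : P ℓ) : f.coeff (w x) = f.coeff x := by
  induction hw using AddSubgroup.closure_induction generalizing x with
  | mem _ hs =>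
    obtain ⟨i, rfl⟩ := hs
    simpa only [hf i] using coeff_wact_apply (sRefl S i) f x
  | zero => rfl
  | add a b _ _ ha hb => rw [AddAut.add_apply, ha, hb]
  | neg a _ ha => rw [← ha, AddAut.apply_neg_self]

lemma coeff_chV_apply_of_mem_Wgrp (T : CharTheory S) {lam : P ℓ} (hlam : dominant lam)
    {w : AddAut (P ℓ)} (hw : w ∈ Wgrp S) (x : P ℓ) :
    (T.chV lam).coeff (w x) = (T.chV lam).coeff x :=
  coeff_apply_of_mem_Wgrp (T.chV_invariant lam hlam) hw x

lemma apply_mem_support_chV (T : CharTheory S) {lam : P ℓ} (hlam : dominant lam)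
    {w : AddAut (P ℓ)} (hw : w ∈ Wgrp S) : w lam ∈ (T.chV lam).coeff.support := by
  rw [Finsupp.mem_support_iff, coeff_chV_apply_of_mem_Wgrp T hlam hw, T.chV_self lam hlam]
  exact one_ne_zero

-- An element of `W` is determined by the images of the fundamental weights `ϖᵢ`, and these
-- are weights of `V(ϖᵢ)`.
theorem finite_Wgrp (T : CharTheory S) : Finite (Wgrp S) := by
  let images : AddAut (P ℓ) → Fin ℓ → P ℓ := fun w i => w (Pi.single i 1)
  have himages : Function.Injective images := by
    intro a b hab
    have hlin : a.toAddMonoidHom.toIntLinearMap = b.toAddMonoidHom.toIntLinearMap :=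
      (Pi.basisFun ℤ (Fin ℓ)).ext fun i => by simpa [images] using congrFun hab i
    exact AddEquiv.ext fun x => LinearMap.congr_fun hlin x
  have hdom : ∀ i : Fin ℓ, dominant (Pi.single i 1 : P ℓ) := fun i j => by
    rcases eq_or_ne j i with rfl | h
    · simp
    · simp [h]
  refine Set.finite_coe_iff.2 (Set.Finite.of_finite_image ?_ himages.injOn)
  refine (Set.Finite.pi fun i => (T.chV (Pi.single i 1)).coeff.support.finite_toSet).subset ?_
  rintro _ ⟨w, hw, rfl⟩ i -
  exact apply_mem_support_chV T (hdom i) hw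

end WeylGroup

section DominanceOrder

variable {ℓ : ℕ} {S : RootDatum ℓ}

/-- The cone `Q⁺`. -/
def posCone (S : RootDatum ℓ) : Submodule ℕ (P ℓ) := Submodule.span ℕ (Set.range S.α)

lemma domle_iff_sub_mem {a b : P ℓ} : domle S a b ↔ b - a ∈ posCone S := by
  simp only [domle, posCone, Submodule.mem_span_range_iff_exists_fun, natCast_zsmul, eq_comm]

lemma domle_trans {a b c : P ℓ} (hab : domle S a b) (hbc : domle S b c) : domle S a c := by
  rw [domle_iff_sub_mem] at *
  simpa using add_mem hab hbc

lemma domle_add {a b c d : P ℓ} (hab : domle S a b) (hcd : domle S c d) :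
    domle S (a + c) (b + d) := by
  rw [domle_iff_sub_mem] at *
  convert add_mem hab hcd using 1
  abel

lemma mem_posCone_of_mem_Φpos {β : P ℓ} (hβ : β ∈ S.Φpos) : β ∈ posCone S := by
  obtain ⟨c, hc⟩ := S.pos_in_cone β hβ
  simpa using domle_iff_sub_mem.1 (⟨c, by rw [sub_zero, hc]⟩ : domle S 0 β)

lemma two_rho_mem_posCone : (2 : ℤ) • ρ ∈ posCone S :=
  S.sum_pos_roots ▸ sum_mem fun _ hβ => mem_posCone_of_mem_Φpos hβ

lemma exists_eq_sum_zsmul_alpha_of_domle_two_rho {μ : P ℓ} (h : domle S μ ((2 : ℤ) • ρ)) :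
    ∃ c : Fin ℓ → ℤ, μ = ∑ i, c i • S.α i := by
  have hle := Submodule.span_le_restrictScalars ℕ ℤ (Set.range S.α)
  have h2ρ : (2 : ℤ) • ρ ∈ Submodule.span ℤ (Set.range S.α) := hle two_rho_mem_posCone
  have hsub : (2 : ℤ) • ρ - μ ∈ Submodule.span ℤ (Set.range S.α) := hle (domle_iff_sub_mem.1 h)
  have hμ : μ ∈ Submodule.span ℤ (Set.range S.α) := by simpa using sub_mem h2ρ hsub
  obtain ⟨c, hc⟩ := (Submodule.mem_span_range_iff_exists_fun ℤ).1 hμ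
  exact ⟨c, hc.symm⟩

variable {w : AddAut (P ℓ)}

lemma neg_apply_mem_posCone (hw : ∀ β ∈ S.Φpos, -(w β) ∈ S.Φpos) {x : P ℓ}
    (hx : x ∈ posCone S) : -(w x) ∈ posCone S := by
  obtain ⟨c, rfl⟩ := (Submodule.mem_span_range_iff_exists_fun ℕ).1 hx
  simp only [map_sum, map_nsmul, ← Finset.sum_neg_distrib, ← smul_neg]
  exact sum_mem fun i _ =>
    Submodule.smul_mem _ _ (mem_posCone_of_mem_Φpos (hw _ (S.simple_mem i)))

lemma domle_neg_apply (hw : ∀ β ∈ S.Φpos, -(w β) ∈ S.Φpos) {a b : P ℓ} (h : domle S a b) :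
    domle S (-(w a)) (-(w b)) := by
  rw [domle_iff_sub_mem] at *
  convert neg_apply_mem_posCone hw h using 1
  rw [map_sub]
  abel

lemma domle_apply_apply (hw : ∀ β ∈ S.Φpos, -(w β) ∈ S.Φpos) {a b : P ℓ} (h : domle S a b) :
    domle S (w b) (w a) := by
  rw [domle_iff_sub_mem] at *
  simpa only [map_sub, neg_sub] using neg_apply_mem_posCone hw h

lemma neg_apply_two_rho (hw : ∀ β ∈ S.Φpos, -(w β) ∈ S.Φpos) :
    -(w ((2 : ℤ) • ρ)) = (2 : ℤ) • ρ := by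
  let σ : P ℓ ↪ P ℓ := ⟨fun β => -(w β), fun a b hab => w.injective (neg_injective hab)⟩
  have hσ : S.Φpos.map σ = S.Φpos :=
    Finset.map_eq_of_subset fun _ hx => by
      obtain ⟨β, hβ, rfl⟩ := Finset.mem_map.1 hx
      exact hw β hβ
  rw [← S.sum_pos_roots, map_sum, ← Finset.sum_neg_distrib]
  conv_rhs => rw [← hσ]
  rw [Finset.sum_map]
  rfl

end DominanceOrder

section InvariantForm

variable {ℓ : ℕ} (H : AddSubgroup (AddAut (P ℓ))) [Fintype H]

noncomputable def invariantForm : LinearMap.BilinForm ℤ (P ℓ) :=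
  ∑ w : H, (dotProductBilin ℤ ℤ).compl₁₂
    (w : AddAut (P ℓ)).toIntLinearEquiv.toLinearMap
    (w : AddAut (P ℓ)).toIntLinearEquiv.toLinearMap

lemma invariantForm_apply (x y : P ℓ) :
    invariantForm H x y = ∑ w : H, (w : AddAut (P ℓ)) x ⬝ᵥ (w : AddAut (P ℓ)) y := by
  simp [invariantForm]

lemma invariantForm_apply_apply {u : AddAut (P ℓ)} (hu : u ∈ H) (x y : P ℓ) :
    invariantForm H (u x) (u y) = invariantForm H x y := by
  simp only [invariantForm_apply, ← AddAut.add_apply]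
  exact Equiv.sum_comp (Equiv.addRight (⟨u, hu⟩ : H))
    fun w : H => (w : AddAut (P ℓ)) x ⬝ᵥ (w : AddAut (P ℓ)) y

lemma invariantForm_self_pos {x : P ℓ} (hx : x ≠ 0) : 0 < invariantForm H x x := by
  have hnonneg : ∀ v : P ℓ, 0 ≤ v ⬝ᵥ v := fun v =>
    Finset.sum_nonneg fun p _ => mul_self_nonneg (v p)
  rw [invariantForm_apply]
  calc 0 < x ⬝ᵥ x := (hnonneg x).lt_of_ne (Ne.symm (mt dotProduct_self_eq_zero.1 hx))
    _ = ((0 : H) : AddAut (P ℓ)) x ⬝ᵥ ((0 : H) : AddAut (P ℓ)) x := rfl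
    _ ≤ _ := Finset.single_le_sum
        (f := fun w : H => (w : AddAut (P ℓ)) x ⬝ᵥ (w : AddAut (P ℓ)) x)
        (fun w _ => hnonneg _) (Finset.mem_univ 0)

variable {S : RootDatum ℓ}

-- Invariance under `sᵢ`, which maps `αᵢ` to `-αᵢ`, makes `y ↦ yᵢ` proportional to `⟨αᵢ, y⟩`.
lemma two_mul_invariantForm_alpha (hW : Wgrp S ≤ H) (i : Fin ℓ) (y : P ℓ) :
    2 * invariantForm H (S.α i) y = y i * invariantForm H (S.α i) (S.α i) := by
  have h := invariantForm_apply_apply H (hW (sRefl_mem_Wgrp i)) (S.α i) y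
  simp only [sRefl_apply, S.cartan_diag, map_sub, map_zsmul, LinearMap.sub_apply,
    LinearMap.smul_apply, smul_eq_mul] at h
  linarith

end InvariantForm

section SimpleRoots

variable {ℓ : ℕ} {S : RootDatum ℓ}

theorem linearIndependent_alpha (T : CharTheory S) : LinearIndependent ℤ S.α := by
  have := finite_Wgrp T
  let _ : Fintype (Wgrp S) := Fintype.ofFinite _
  rw [Fintype.linearIndependent_iff]
  intro c hc p
  have hα : S.α p ≠ 0 := fun h => by simpa [h] using S.cartan_diag p
  have hpos := invariantForm_self_pos (Wgrp S) hα
  have hsum : ∑ j, c j * (2 * invariantForm (Wgrp S) (S.α j) (Pi.single p 1)) = 0 := by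
    have h0 : invariantForm (Wgrp S) (∑ j, c j • S.α j) (Pi.single p 1) = 0 := by
      rw [hc, map_zero, LinearMap.zero_apply]
    simp only [map_sum, map_zsmul, LinearMap.sum_apply, LinearMap.smul_apply,
      smul_eq_mul] at h0
    simp only [mul_left_comm _ (2 : ℤ), ← Finset.mul_sum, h0, mul_zero]
  simp only [two_mul_invariantForm_alpha (Wgrp S) le_rfl, Pi.single_apply] at hsum
  simp only [mul_ite, ite_mul, one_mul, zero_mul, mul_zero, Finset.sum_ite_eq', Finset.mem_univ,
    if_true] at hsum
  exact (mul_eq_zero.1 hsum).resolve_right hpos.ne'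

lemma nonneg_of_zsmul_alpha_mem_posCone (T : CharTheory S) {k : ℤ} {i : Fin ℓ}
    (h : k • S.α i ∈ posCone S) : 0 ≤ k := by
  obtain ⟨d, hd⟩ := (Submodule.mem_span_range_iff_exists_fun ℕ).1 h
  have hcoeffs : ∑ j, (d j : ℤ) • S.α j = ∑ j, (Pi.single i k : Fin ℓ → ℤ) j • S.α j := by
    simp only [natCast_zsmul, hd, Pi.single_apply, ite_smul, zero_smul, Finset.sum_ite_eq',
      Finset.mem_univ, if_true]
  have := Fintype.linearIndependent_iffₛ.1 (linearIndependent_alpha T) _ _ hcoeffs i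
  simp only [Pi.single_eq_same] at this
  omega

-- `sᵢ(w₀ δ)` lies in the `W`-orbit of `δ`, and `w₀` reverses the dominance order, so
-- `w₀ δ ≤ sᵢ(w₀ δ) = w₀ δ - ⟨w₀ δ, αᵢ^∨⟩ αᵢ`.
theorem dominant_neg_apply_of_isLongest (T : CharTheory S) {w₀ : AddAut (P ℓ)}
    (hw₀ : IsLongest S w₀) {δ : P ℓ} (hδ : dominant δ) : dominant (-(w₀ δ)) := by
  intro i
  have hmem : -w₀ + sRefl S i + w₀ ∈ Wgrp S :=
    add_mem (add_mem (neg_mem hw₀.1) (sRefl_mem_Wgrp i)) hw₀.1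
  have horbit : domle S ((-w₀ + sRefl S i + w₀) δ) δ :=
    T.chV_support_le δ hδ _ (apply_mem_support_chV T hδ hmem)
  have hle := domle_apply_apply hw₀.2 horbit
  simp only [AddAut.add_apply, AddAut.apply_neg_self] at hle
  rw [domle_iff_sub_mem, sRefl_apply, sub_sub_cancel_left, ← neg_smul] at hle
  simpa using nonneg_of_zsmul_alpha_mem_posCone T hle

end SimpleRoots

section Characters

variable {ℓ : ℕ} {S : RootDatum ℓ} (T : CharTheory S)

lemma domle_add_of_mem_support_mul {f g : R ℓ} {a b : P ℓ}
    (hf : ∀ x ∈ f.coeff.support, domle S x a) (hg : ∀ x ∈ g.coeff.support, domle S x b) :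
    ∀ x ∈ (f * g).coeff.support, domle S x (a + b) := by
  intro x hx
  obtain ⟨y, hy, z, hz, rfl⟩ :=
    Finset.mem_add.1 (AddMonoidAlgebra.support_coeff_mul_subset f g hx)
  exact domle_add (hf y hy) (hg z hz)

lemma sum_sub_rho_mem_support_chV_rho (hchρ : T.chV ρ = e ρ * ∏ β ∈ S.Φpos, (1 + e (-β)))
    {A : Finset (P ℓ)} (hA : A ⊆ S.Φpos) : (∑ β ∈ A, β) - ρ ∈ (T.chV ρ).coeff.support := by
  have hexpand : T.chV ρ = ∑ t ∈ S.Φpos.powerset, e (ρ - ∑ β ∈ t, β) := by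
    rw [hchρ, Finset.prod_one_add, Finset.mul_sum]
    refine Finset.sum_congr rfl fun t _ => ?_
    rw [prod_e, e_mul_e, Finset.sum_neg_distrib, sub_eq_add_neg]
  have hcompl : ρ - ∑ β ∈ S.Φpos \ A, β = (∑ β ∈ A, β) - ρ := by
    have h : ∑ β ∈ S.Φpos \ A, β + ∑ β ∈ A, β = ρ + ρ := by
      rw [Finset.sum_sdiff hA, S.sum_pos_roots, two_smul]
    rw [← sub_eq_of_eq_add h.symm]
    abel
  rw [Finsupp.mem_support_iff, hexpand, AddMonoidAlgebra.coeff_sum, Finset.sum_apply']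
  refine (lt_of_lt_of_le ?_ (Finset.single_le_sum (fun t _ => coeff_e_nonneg _ _)
    (Finset.mem_powerset.2 (Finset.sdiff_subset (s := S.Φpos) (t := A))))).ne'
  rw [hcompl, coeff_e, if_pos rfl]
  exact one_pos

lemma domle_dot_sum_two_rho (hchρ : T.chV ρ = e ρ * ∏ β ∈ S.Φpos, (1 + e (-β)))
    {A : Finset (P ℓ)} (hA : A ⊆ S.Φpos) {w : AddAut (P ℓ)} (hw : w ∈ Wgrp S) :
    domle S (dot w (∑ β ∈ A, β)) ((2 : ℤ) • ρ) := by
  set χ := T.chV ρ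
  have hρ : dominant (ρ : P ℓ) := fun _ => zero_le_one
  have hχ : ∀ x, 0 ≤ χ.coeff x := T.chV_coeff_nonneg ρ
  have hρχ : ρ ∈ χ.coeff.support := by
    rw [Finsupp.mem_support_iff, T.chV_self ρ hρ]
    exact one_ne_zero
  have hweight : (∑ β ∈ A, β) - ρ + ρ + ρ ∈ (χ * χ * χ).coeff.support :=
    add_mem_support_coeff_mul (coeff_mul_nonneg hχ hχ) hχ
      (add_mem_support_coeff_mul hχ hχ (sum_sub_rho_mem_support_chV_rho T hchρ hA) hρχ) hρχ
  have hinv : ∀ i, wact (sRefl S i) (χ * χ * χ) = χ * χ * χ := fun i => by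
    rw [wact_mul, wact_mul, T.chV_invariant ρ hρ i]
  have hχle : ∀ x ∈ χ.coeff.support, domle S x ρ := T.chV_support_le ρ hρ
  have hle : domle S (w ((∑ β ∈ A, β) + ρ)) (ρ + ρ + ρ) := by
    refine domle_add_of_mem_support_mul (domle_add_of_mem_support_mul hχle hχle) hχle _ ?_
    rw [Finsupp.mem_support_iff, coeff_apply_of_mem_Wgrp hinv hw, ← Finsupp.mem_support_iff]
    simpa only [sub_add_cancel] using hweight
  rw [domle_iff_sub_mem] at hle ⊢
  convert hle using 1
  rw [dot, two_smul]
  abel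

lemma domle_two_rho_of_mem_support_chV_neg_apply_dot
    (hchρ : T.chV ρ = e ρ * ∏ β ∈ S.Φpos, (1 + e (-β))) {w₀ : AddAut (P ℓ)}
    (hw₀ : IsLongest S w₀) {A : Finset (P ℓ)} (hA : A ⊆ S.Φpos)
    {w : AddAut (P ℓ)} (hw : w ∈ Wgrp S) (hdom : dominant (dot w (∑ β ∈ A, β))) {μ : P ℓ}
    (hμ : μ ∈ (T.chV (-(w₀ (dot w (∑ β ∈ A, β))))).coeff.support) :
    domle S μ ((2 : ℤ) • ρ) := by
  have hle := domle_neg_apply hw₀.2 (domle_dot_sum_two_rho T hchρ hA hw)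
  rw [neg_apply_two_rho hw₀.2] at hle
  exact domle_trans (T.chV_support_le _ (dominant_neg_apply_of_isLongest T hw₀ hdom) μ hμ) hle

end Characters

section Multiplicities

variable {ℓ : ℕ} {S : RootDatum ℓ} {T : CharTheory S}

def charSubmonoid (T : CharTheory S) : AddSubmonoid (R ℓ) where
  carrier := {g | IsChar T g}
  zero_mem' := ⟨[], by simp, by simp⟩
  add_mem' := by
    rintro _ _ ⟨l₁, h₁, rfl⟩ ⟨l₂, h₂, rfl⟩
    exact ⟨l₁ ++ l₂, fun μ hμ => (List.mem_append.1 hμ).elim (h₁ μ) (h₂ μ), by simp⟩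

lemma chV_mem_charSubmonoid {μ : P ℓ} (hμ : dominant μ) : T.chV μ ∈ charSubmonoid T :=
  ⟨[μ], by simpa using hμ, by simp⟩

lemma natCast_zsmul_chV_mem_charSubmonoid {μ : P ℓ} (hμ : dominant μ) (n : ℕ) :
    (n : ℤ) • T.chV μ ∈ charSubmonoid T := by
  rw [natCast_zsmul]
  exact nsmul_mem (chV_mem_charSubmonoid hμ) n

lemma IsChar.coeff_nonneg {g : R ℓ} (hg : IsChar T g) (x : P ℓ) : 0 ≤ g.coeff x := by
  obtain ⟨l, -, rfl⟩ := hg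
  refine List.sum_induction (fun f : R ℓ => 0 ≤ f.coeff x) (fun f g hf hg => ?_) le_rfl ?_
  · simpa only [AddMonoidAlgebra.coeff_add, Finsupp.add_apply] using add_nonneg hf hg
  · simp only [List.mem_map]
    rintro _ ⟨μ, -, rfl⟩
    exact T.chV_coeff_nonneg μ x

lemma Occurs.coeff_pos {lam : P ℓ} {g : R ℓ} (h : Occurs T lam g) (hlam : dominant lam) :
    0 < g.coeff lam := by
  obtain ⟨h, hh, rfl⟩ := h
  simp only [AddMonoidAlgebra.coeff_add, Finsupp.add_apply, Nat.cast_one, one_smul,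
    T.chV_self lam hlam]
  linarith [hh.coeff_nonneg lam]

lemma Occurs.exists_mem_support_of_sum_eq {lam : P ℓ} {g h : R ℓ} (hg : Occurs T lam g)
    (hlam : dominant lam) (hh : IsChar T h) {ι : Type*} {s : Finset ι} {f : ι → R ℓ}
    (hsum : ∑ i ∈ s, f i = g + h) : ∃ i ∈ s, lam ∈ (f i).coeff.support := by
  have hcoeff : ∑ i ∈ s, (f i).coeff lam ≠ 0 := by
    rw [← Finset.sum_apply', ← AddMonoidAlgebra.coeff_sum, hsum, AddMonoidAlgebra.coeff_add,
      Finsupp.add_apply]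
    linarith [hg.coeff_pos hlam, hh.coeff_nonneg lam]
  simpa only [Finsupp.mem_support_iff] using Finset.exists_ne_zero_of_sum_ne_zero hcoeff

lemma OccursWithMult.add {n : ℕ} {lam : P ℓ} {g h : R ℓ} (hg : OccursWithMult T n lam g)
    (hh : IsChar T h) : OccursWithMult T n lam (g + h) := by
  obtain ⟨k, hk, rfl⟩ := hg
  exact ⟨k + h, (charSubmonoid T).add_mem hk hh, by abel⟩

lemma OccursWithMult.occurs {n : ℕ} {lam : P ℓ} {g : R ℓ} (hg : OccursWithMult T n lam g)
    (hlam : dominant lam) (hn : 0 < n) : Occurs T lam g := by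
  obtain ⟨k, hk, rfl⟩ := hg
  obtain ⟨n, rfl⟩ := Nat.exists_eq_add_of_lt hn
  refine ⟨(n : ℤ) • T.chV lam + k,
    (charSubmonoid T).add_mem (natCast_zsmul_chV_mem_charSubmonoid hlam n) hk, ?_⟩
  push_cast
  simp only [zero_add, add_smul, one_smul]
  abel

lemma occursWithMult_sum {m : P ℓ → ℕ} {s : Finset (P ℓ)} (hdom : ∀ ν ∈ s, dominant ν)
    (hout : ∀ ν ∉ s, m ν = 0) (lam : P ℓ) :
    OccursWithMult T (m lam) lam (∑ ν ∈ s, (m ν : ℤ) • T.chV ν) := by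
  have hchar : ∀ t ⊆ s, IsChar T (∑ ν ∈ t, (m ν : ℤ) • T.chV ν) := fun t ht =>
    (charSubmonoid T).sum_mem fun ν hν =>
      natCast_zsmul_chV_mem_charSubmonoid (hdom ν (ht hν)) (m ν)
  by_cases hlam : lam ∈ s
  · exact ⟨_, hchar _ (Finset.erase_subset lam s), (Finset.add_sum_erase s _ hlam).symm⟩
  · exact ⟨_, hchar s subset_rfl, by simp [hout lam hlam]⟩

end Multiplicities

/-- Let `G` be an arbitrary simple complex algebraic group
(not necessarily simply-connected).  Every dominant integral weight `λ` with
`V(λ) ⊂ H•(G/B, ∧•𝒯_{G/B})` satisfies `λ ≤ 2ρ` and hence lies in the root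
lattice `Q`, so `V(λ)` is a representation of `G`; consequently, if Kostant's
conjecture holds for the simply-connected cover, then for `λ ∈ P⁺` one has
`V(λ) ⊂ H•(G/B, ∧•𝒯_{G/B})` if and only if `λ ≤ 2ρ`, with multiplicity at
least `m λ`.

The hypotheses are as in the main theorem: `HT` is the character of
`H•(G/B, ∧•𝒯_{G/B})`; `hgrT`, `hBWB`, `hsurj` are the Borel–Weil–Bott
constraints on the cohomology of the graded line bundles of
`∧•𝒯_{G/B} = 𝓛(∧•𝔲)`; `hembed` is the embedding
`V(ρ) ⊗ V(ρ) ↪ H•(G/B, ∧•𝒯_{G/B})` (which makes sense for the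
simply-connected cover); `m`, `msupp` give the decomposition of
`V(ρ) ⊗ V(ρ)`; and `hKostant` is Kostant's conjecture for the
simply-connected cover. -/
theorem occurs_in_hochschild_cohomology_iff_le_two_rho_of_simple
    {ℓ : ℕ} (S : RootDatum ℓ) (T : CharTheory S)
    (w₀ : AddAut (P ℓ)) (hw₀ : IsLongest S w₀)
    (hchρ : T.chV ρ = e ρ * ∏ β ∈ S.Φpos, (1 + e (-β)))
    (grT : Multiset (P ℓ))
    (hgrT : grT = S.Φpos.powerset.val.map (fun A => -(∑ β ∈ A, β)))
    (Hgr : P ℓ → R ℓ)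
    (hBWB : ∀ ξ ∈ grT, Hgr ξ = 0 ∨ ∃ w ∈ Wgrp S, dominant (dot w (-ξ)) ∧
      Hgr ξ = T.chV (-(w₀ (dot w (-ξ)))))
    (HT : R ℓ)
    (hsurj : ∃ h : R ℓ, IsChar T h ∧ (grT.map Hgr).sum = HT + h)
    (hembed : ∃ h : R ℓ, IsChar T h ∧ HT = T.chV ρ * T.chV ρ + h)
    (m : P ℓ → ℕ) (msupp : Finset (P ℓ))
    (hm_dom : ∀ ν ∈ msupp, dominant ν)
    (hm_out : ∀ ν ∉ msupp, m ν = 0)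
    (hdecomp : T.chV ρ * T.chV ρ = ∑ ν ∈ msupp, (m ν : ℤ) • T.chV ν)
    (hKostant : ∀ lam : P ℓ, dominant lam →
      (0 < m lam ↔ domle S lam ((2 : ℤ) • ρ)))
    (lam : P ℓ) (hlam : dominant lam) :
    -- every irreducible constituent of `H•(G/B, ∧•𝒯_{G/B})` has highest
    -- weight `≤ 2ρ`, hence lying in the root lattice `Q`, so it is a
    -- representation of `G` even when `G` is not simply connected:
    (Occurs T lam HT →
      domle S lam ((2 : ℤ) • ρ) ∧ ∃ c : Fin ℓ → ℤ, lam = ∑ i, c i • S.α i) ∧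
    -- consequently, assuming Kostant's conjecture:
    (Occurs T lam HT ↔ domle S lam ((2 : ℤ) • ρ)) ∧
    (domle S lam ((2 : ℤ) • ρ) → OccursWithMult T (m lam) lam HT) := by
  have hle : Occurs T lam HT → domle S lam ((2 : ℤ) • ρ) := by
    intro hocc
    subst hgrT
    obtain ⟨h, hh, hsum⟩ := hsurj
    rw [Multiset.map_map] at hsum
    obtain ⟨A, hA, hmem⟩ := hocc.exists_mem_support_of_sum_eq hlam hh hsum
    rcases hBWB _ (Multiset.mem_map_of_mem _ hA) with h0 | ⟨w, hw, hdom, hHgr⟩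
    · simp [h0] at hmem
    · rw [neg_neg] at hdom hHgr
      exact domle_two_rho_of_mem_support_chV_neg_apply_dot T hchρ hw₀
        (Finset.mem_powerset.1 hA) hw hdom (by simpa [hHgr] using hmem)
  have hmult : OccursWithMult T (m lam) lam HT := by
    obtain ⟨h, hh, rfl⟩ := hembed
    rw [hdecomp]
    exact (occursWithMult_sum hm_dom hm_out lam).add hh
  exact ⟨fun h => ⟨hle h, exists_eq_sum_zsmul_alpha_of_domle_two_rho (hle h)⟩,
    ⟨hle, fun h => hmult.occurs hlam ((hKostant lam hlam).2 h)⟩, fun _ => hmult⟩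

end KostantHH
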